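/- For every odd integer n ≥ 3 there exists a graph G on n vertices and a real number t > 0, namely t = (n−1)/(n+1) with G = K_{(n−1)/2,(n+1)/2}, such that G is t-tough, σ₂(G) = 2n/(t+1) − 2, and G is not hamiltonian. Hence the bound σ₂(G) > 2n/(t+1) − 2 for hamiltonicity of t-tough graphs is best possible. -/

import Mathlib

open SimpleGraph

/-- The number of connected components of `G − S`, the subgraph of `G` induced on the
complement of the vertex set `S`. -/
noncomputable def numComp {V : Type*} (G : SimpleGraph V) (S : Set V) : ℕ :=
  Nat.card (G.induce Sᶜ).ConnectedComponent

/-- A graph `G` is `t`-tough if `|S| ≥ t · c(G − S)` for every vertex set `S` whose removal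
leaves at least two components. -/
def Tough {V : Type*} [Fintype V] (t : ℝ) (G : SimpleGraph V) : Prop :=
  ∀ S : Finset V, 2 ≤ numComp G (S : Set V) →
    t * (numComp G (S : Set V) : ℝ) ≤ (S.card : ℝ)

/-!
Write `n = 2m + 1`, so `G = K_{m,m+1}` and `t = m/(m+1)`. Two nonadjacent vertices of a complete
bipartite graph lie on the same side, so their degree sum is `2m` or `2(m+1)`, and
`σ₂(G) = 2m = 2n/(t+1) − 2`. If `G − S` has two components, `S` contains a whole side (any two
surviving vertices on opposite sides would connect everything), so `|S| ≥ m` and at most `m + 1`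
vertices, hence components, survive: `t · c(G − S) ≤ m ≤ |S|`. Finally `G` is 2-colourable, so every
closed walk in it has even length and no cycle passes through all `n` vertices.
-/

section

variable {V : Type*}

lemma numComp_le_one_of_preconnected (G : SimpleGraph V) {S : Set V}
    (h : (G.induce Sᶜ).Preconnected) : numComp G S ≤ 1 :=
  have := h.subsingleton_connectedComponent
  Finite.card_le_one_iff_subsingleton.2 this

lemma numComp_add_card_le [Fintype V] (G : SimpleGraph V) (S : Finset V) :
    numComp G S + S.card ≤ Fintype.card V := by
  have hc : numComp G S ≤ Nat.card ((S : Set V)ᶜ : Set V) :=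
    Nat.card_le_card_of_surjective _ Quot.mk_surjective
  have hS : Nat.card ((S : Set V)ᶜ : Set V) = Fintype.card V - S.card := by
    classical
    rw [← Finset.coe_compl, Nat.card_coe_set_eq, Set.ncard_coe_finset, Finset.card_compl]
  have : S.card ≤ Fintype.card V := Finset.card_le_univ S
  omega

end

namespace SimpleGraph

variable {V α β : Type*}

theorem Coloring.not_isHamiltonian_of_odd_card [Fintype V] [DecidableEq V] {G : SimpleGraph V}
    (c : G.Coloring Bool) (hodd : Odd (Fintype.card V)) (hV : Fintype.card V ≠ 1) :
    ¬ G.IsHamiltonian := by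
  intro hG
  obtain ⟨a, p, hp⟩ := hG hV
  have heven : Even p.length := (c.even_length_iff_congr p).2 Iff.rfl
  rw [hp.length_eq] at heven
  exact Nat.not_even_iff_odd.2 hodd heven

lemma completeBipartiteGraph_preconnected_induce {S : Set (α ⊕ β)} {a : α} {b : β}
    (ha : Sum.inl a ∉ S) (hb : Sum.inr b ∉ S) :
    ((completeBipartiteGraph α β).induce Sᶜ).Preconnected := by
  have hab : ((completeBipartiteGraph α β).induce Sᶜ).Adj ⟨_, ha⟩ ⟨_, hb⟩ := by simp
  have hreach : ∀ u, ((completeBipartiteGraph α β).induce Sᶜ).Reachable u ⟨_, ha⟩ := by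
    rintro ⟨x | y, hu⟩
    · exact (Adj.reachable (v := ⟨_, hb⟩) (by simp)).trans hab.reachable.symm
    · exact Adj.reachable (by simp)
  exact fun u v => (hreach u).trans (hreach v).symm

lemma completeBipartiteGraph_range_subset_of_two_le_numComp {S : Set (α ⊕ β)}
    (h : 2 ≤ numComp (completeBipartiteGraph α β) S) :
    Set.range Sum.inl ⊆ S ∨ Set.range Sum.inr ⊆ S := by
  by_contra! hS
  obtain ⟨⟨_, ⟨a, rfl⟩, ha⟩, ⟨_, ⟨b, rfl⟩, hb⟩⟩ := And.imp Set.not_subset.1 Set.not_subset.1 hS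
  have := numComp_le_one_of_preconnected _ (completeBipartiteGraph_preconnected_induce ha hb)
  omega

lemma completeBipartiteGraph_numComp_le [Fintype α] [Fintype β] {S : Finset (α ⊕ β)}
    (h : 2 ≤ numComp (completeBipartiteGraph α β) S) :
    (Fintype.card α ≤ S.card ∧ numComp (completeBipartiteGraph α β) S ≤ Fintype.card β) ∨
      (Fintype.card β ≤ S.card ∧ numComp (completeBipartiteGraph α β) S ≤ Fintype.card α) := by
  have hle := numComp_add_card_le (completeBipartiteGraph α β) S
  rw [Fintype.card_sum] at hle
  rcases completeBipartiteGraph_range_subset_of_two_le_numComp h with hα | hβ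
  · have : Fintype.card α ≤ S.card := Finset.card_le_card_of_injOn Sum.inl
      (fun a _ => hα ⟨a, rfl⟩) Sum.inl_injective.injOn
    omega
  · have : Fintype.card β ≤ S.card := Finset.card_le_card_of_injOn Sum.inr
      (fun b _ => hβ ⟨b, rfl⟩) Sum.inr_injective.injOn
    omega

theorem tough_completeBipartiteGraph [Fintype α] [Fintype β]
    (hαβ : Fintype.card α ≤ Fintype.card β) :
    Tough ((Fintype.card α : ℝ) / Fintype.card β) (completeBipartiteGraph α β) := by
  intro S hS
  set c := numComp (completeBipartiteGraph α β) S
  have hc : (2 : ℝ) ≤ c := by exact_mod_cast hS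
  rcases completeBipartiteGraph_numComp_le hS with ⟨hSα, hcβ⟩ | ⟨hSβ, hcα⟩
  · have hcβ : (c : ℝ) ≤ Fintype.card β := by exact_mod_cast hcβ
    have hSα : (Fintype.card α : ℝ) ≤ S.card := by exact_mod_cast hSα
    calc (Fintype.card α : ℝ) / Fintype.card β * c
        ≤ Fintype.card α / Fintype.card β * Fintype.card β := by gcongr
      _ = Fintype.card α := div_mul_cancel₀ _ (by linarith)
      _ ≤ S.card := hSα
  · have hαβ : (Fintype.card α : ℝ) ≤ Fintype.card β := by exact_mod_cast hαβ
    have hcα : (c : ℝ) ≤ Fintype.card α := by exact_mod_cast hcα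
    have hSβ : (Fintype.card β : ℝ) ≤ S.card := by exact_mod_cast hSβ
    calc (Fintype.card α : ℝ) / Fintype.card β * c
        ≤ 1 * c := by gcongr; exact div_le_one_of_le₀ hαβ (by positivity)
      _ ≤ S.card := by linarith

lemma completeBipartiteGraph_neighborSet_inl (a : α) :
    (completeBipartiteGraph α β).neighborSet (Sum.inl a) = Set.range Sum.inr := by
  ext (x | y) <;> simp

lemma completeBipartiteGraph_neighborSet_inr (b : β) :
    (completeBipartiteGraph α β).neighborSet (Sum.inr b) = Set.range Sum.inl := by
  ext (x | y) <;> simp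

lemma completeBipartiteGraph_card_neighborSet_inl (a : α) :
    Nat.card ((completeBipartiteGraph α β).neighborSet (Sum.inl a)) = Nat.card β := by
  rw [completeBipartiteGraph_neighborSet_inl, Nat.card_range_of_injective Sum.inr_injective]

lemma completeBipartiteGraph_card_neighborSet_inr (b : β) :
    Nat.card ((completeBipartiteGraph α β).neighborSet (Sum.inr b)) = Nat.card α := by
  rw [completeBipartiteGraph_neighborSet_inr, Nat.card_range_of_injective Sum.inl_injective]

lemma completeBipartiteGraph_two_mul_min_le_card_neighborSet_add {u v : α ⊕ β}
    (h : ¬ (completeBipartiteGraph α β).Adj u v) :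
    2 * min (Nat.card α) (Nat.card β) ≤ Nat.card ((completeBipartiteGraph α β).neighborSet u) +
      Nat.card ((completeBipartiteGraph α β).neighborSet v) := by
  rcases u with a | b <;> rcases v with a' | b' <;>
    simp only [completeBipartiteGraph_card_neighborSet_inl,
      completeBipartiteGraph_card_neighborSet_inr] <;> simp at h <;> omega

end SimpleGraph

/-- **Sharpness of the Ore-type bound.** For every odd `n ≥ 3`, the complete bipartite
graph `G = K_{(n−1)/2,(n+1)/2}` together with `t = (n−1)/(n+1)` is `t`-tough, satisfies
`σ₂(G) = 2n/(t+1) − 2`, and is not hamiltonian. -/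
theorem stmt9 (n : ℕ) (hn : 3 ≤ n) (hodd : Odd n) :
    Tough (((n : ℝ) - 1) / ((n : ℝ) + 1))
        (completeBipartiteGraph (Fin ((n - 1) / 2)) (Fin ((n + 1) / 2))) ∧
    (∀ u v : Fin ((n - 1) / 2) ⊕ Fin ((n + 1) / 2), u ≠ v →
        ¬ (completeBipartiteGraph (Fin ((n - 1) / 2)) (Fin ((n + 1) / 2))).Adj u v →
        2 * (n : ℝ) / ((((n : ℝ) - 1) / ((n : ℝ) + 1)) + 1) - 2 ≤
          ((Nat.card ((completeBipartiteGraph (Fin ((n - 1) / 2)) (Fin ((n + 1) / 2))).neighborSet u) +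
            Nat.card ((completeBipartiteGraph (Fin ((n - 1) / 2)) (Fin ((n + 1) / 2))).neighborSet v) : ℕ) : ℝ)) ∧
    (∃ u v : Fin ((n - 1) / 2) ⊕ Fin ((n + 1) / 2), u ≠ v ∧
        ¬ (completeBipartiteGraph (Fin ((n - 1) / 2)) (Fin ((n + 1) / 2))).Adj u v ∧
        ((Nat.card ((completeBipartiteGraph (Fin ((n - 1) / 2)) (Fin ((n + 1) / 2))).neighborSet u) +
            Nat.card ((completeBipartiteGraph (Fin ((n - 1) / 2)) (Fin ((n + 1) / 2))).neighborSet v) : ℕ) : ℝ) =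
          2 * (n : ℝ) / ((((n : ℝ) - 1) / ((n : ℝ) + 1)) + 1) - 2) ∧
    ¬ (completeBipartiteGraph (Fin ((n - 1) / 2)) (Fin ((n + 1) / 2))).IsHamiltonian := by
  obtain ⟨m, rfl⟩ := hodd
  rw [show (2 * m + 1 - 1) / 2 = m by omega, show (2 * m + 1 + 1) / 2 = m + 1 by omega]
  have ht : ((↑(2 * m + 1) : ℝ) - 1) / (↑(2 * m + 1) + 1) = m / (m + 1) := by
    push_cast; field_simp; ring
  have hσ : 2 * (↑(2 * m + 1) : ℝ) / (m / (m + 1) + 1) - 2 = 2 * m := by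
    push_cast; field_simp; ring
  rw [ht, hσ]
  refine ⟨by simpa using tough_completeBipartiteGraph (α := Fin m) (β := Fin (m + 1)) (by simp),
    fun u v _ huv => ?_, ⟨Sum.inr 0, Sum.inr ⟨1, by omega⟩, by simp [Fin.ext_iff], by simp, ?_⟩,
    (CompleteBipartiteGraph.bicoloring _ _).not_isHamiltonian_of_odd_card (by simp) (by simp; omega)⟩
  · have := completeBipartiteGraph_two_mul_min_le_card_neighborSet_add huv
    simp only [Nat.card_eq_fintype_card, Fintype.card_fin, min_eq_left m.le_succ] at this
    exact_mod_cast this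
  · simp only [completeBipartiteGraph_card_neighborSet_inr, Nat.card_eq_fintype_card,
      Fintype.card_fin]
    push_cast; ring
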